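/- Let Ω ⊂ ℝⁿ be open, bounded, with C^{1,1} boundary, s ∈ (0,1), and u : ℝⁿ → ℝ bounded and measurable. Suppose u satisfies the homogeneous nonlocal Neumann condition: for a.e. x ∈ ℝⁿ\Ω, u(x) = ( ∫_Ω |x−y|^{−(n+2s)} dy )^{−1} · ∫_Ω u(y)|x−y|^{−(n+2s)} dy. Then for every x ∈ Ω, ∫_{ℝⁿ\Ω} (u(x)−u(y)) |x−y|^{−(n+2s)} dy = ∫_Ω (u(x)−u(z)) k(x,z) dz, where k(x,z) = ∫_{ℝⁿ\Ω} ( |x−y|^{n+2s} |z−y|^{n+2s} ∫_Ω |y−w|^{−(n+2s)} dw )^{−1} dy, and in particular both sides are finite. -/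

import Mathlib

open MeasureTheory Metric Set

/-- A bounded open set with `C^{1,1}` boundary: we encode the analytically relevant
consequence, namely the uniform interior and exterior sphere conditions. -/
def HasC11Boundary {n : ℕ} (Ω : Set (EuclideanSpace ℝ (Fin n))) : Prop :=
  ∃ r > 0, ∀ p ∈ frontier Ω,
    (∃ x ∈ Ω, Metric.closedBall x r ⊆ closure Ω ∧ dist p x = r) ∧
    (∃ y ∈ (closure Ω)ᶜ, Metric.closedBall y r ⊆ Ωᶜ ∧ dist p y = r)

/-- The kernel k(x,z) = ∫_{ℝⁿ\Ω} ( |x−y|^{n+2s}|z−y|^{n+2s} ∫_Ω |y−w|^{−(n+2s)} dw )⁻¹ dy. -/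
noncomputable def kKer {n : ℕ} (s : ℝ) (Ω : Set (EuclideanSpace ℝ (Fin n)))
    (x z : EuclideanSpace ℝ (Fin n)) : ℝ :=
  ∫ y in Ωᶜ,
    (‖x - y‖ ^ ((n : ℝ) + 2*s) * ‖z - y‖ ^ ((n : ℝ) + 2*s) *
      ∫ w in Ω, ‖y - w‖ ^ (-((n : ℝ) + 2*s)))⁻¹

open Filter Topology Module

/-! Let `A(y) = ∫_Ω |y - w|^(-a) dw` and `K(x, y, z) = |x - y|^(-a) |y - z|^(-a) / A(y)`, with
`a = n + 2s > n`, so that `k(x, z) = ∫_{Ωᶜ} K(x, y, z) dy`. For `y ∉ closure Ω` we have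
`∫_Ω K(x, y, z) dz = |x - y|^(-a)`, and the Neumann condition says exactly that
`∫_Ω u(z) K(x, y, z) dz = u(y) |x - y|^(-a)`. So the left integrand at `y` equals
`∫_Ω (u(x) - u(z)) K(x, y, z) dz`, and Fubini exchanges the two integrals: by Tonelli and the
first identity, `K(x, ·, ·)` is integrable on `Ωᶜ × Ω` since `|x - ·|^(-a)` is integrable away
from `x`, and `u` is bounded. The regularity of `∂Ω` is needed only for `|∂Ω| = 0`, i.e. for
`y ∉ closure Ω` at a.e. `y ∈ Ωᶜ`: the exterior ball condition makes `∂Ω` porous, and a porous set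
has no Lebesgue density points. -/

theorem measure_eq_zero_of_porous {α : Type*} [PseudoMetricSpace α] [MeasurableSpace α]
    [BorelSpace α] [SecondCountableTopology α] (μ : Measure α) [IsLocallyFiniteMeasure μ]
    [IsUnifLocDoublingMeasure μ] {S : Set α} (hS : MeasurableSet S) (K : ℝ)
    (hpor : ∀ x ∈ S, ∀ᶠ t in 𝓝[>] (0 : ℝ), ∃ c, x ∈ closedBall c (K * t) ∧
      Disjoint S (closedBall c t)) :
    μ S = 0 := by
  have hnot : ∀ᵐ x ∂μ.restrict S, False := by
    filter_upwards [IsUnifLocDoublingMeasure.ae_tendsto_measure_inter_div μ S K,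
      ae_restrict_mem hS] with x hx hxS
    obtain ⟨c, hc⟩ := (hpor x hxS).choice
    have hlim := hx c id tendsto_id (hc.mono fun t ht => ht.1)
    have hzero : ∀ᶠ t in 𝓝[>] (0 : ℝ),
        μ (S ∩ closedBall (c t) t) / μ (closedBall (c t) t) = 0 :=
      hc.mono fun t ht => by simp [ht.2.inter_eq]
    exact zero_ne_one (tendsto_const_nhds_iff.1 ((tendsto_congr' hzero).1 hlim))
  rwa [eventually_false_iff_eq_bot, ae_eq_bot, Measure.restrict_eq_zero] at hnot

theorem exists_closedBall_subset_ball_of_dist_eq {E : Type*} [NormedAddCommGroup E]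
    [NormedSpace ℝ E] {p y : E} {r t : ℝ} (hpy : dist p y = r) (ht : t ∈ Ioo 0 (r / 2)) :
    ∃ c, p ∈ closedBall c (2 * t) ∧ closedBall c t ⊆ ball y r := by
  obtain ⟨ht0, htr⟩ := ht
  have hr : 0 < r := by linarith
  refine ⟨AffineMap.lineMap p y (2 * t / r), ?_, fun z hz => ?_⟩
  · rw [mem_closedBall, dist_comm, dist_lineMap_left, hpy, Real.norm_of_nonneg (by positivity),
      div_mul_cancel₀ _ hr.ne']
  · have hcy := dist_lineMap_right p y (2 * t / r)
    rw [hpy, Real.norm_of_nonneg (by rw [sub_nonneg, div_le_one hr]; linarith)] at hcy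
    rw [mem_closedBall] at hz
    rw [mem_ball]
    have : (1 - 2 * t / r) * r = r - 2 * t := by field_simp
    linarith [dist_triangle z (AffineMap.lineMap p y (2 * t / r)) y]

theorem HasC11Boundary.volume_frontier_eq_zero {n : ℕ} {Ω : Set (EuclideanSpace ℝ (Fin n))}
    (h : HasC11Boundary Ω) : volume (frontier Ω) = 0 := by
  obtain ⟨r, hr, hsph⟩ := h
  refine measure_eq_zero_of_porous volume isClosed_frontier.measurableSet 2 fun p hp => ?_
  obtain ⟨y, -, hyΩ, hpy⟩ := (hsph p hp).2
  have hball : Disjoint (frontier Ω) (ball y r) := by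
    refine (disjoint_compl_right.mono_left frontier_subset_closure).mono_right ?_
    rw [← interior_compl]
    exact interior_maximal (ball_subset_closedBall.trans hyΩ) isOpen_ball
  filter_upwards [Ioo_mem_nhdsGT (half_pos hr)] with t ht
  obtain ⟨c, hpc, hc⟩ := exists_closedBall_subset_ball_of_dist_eq hpy ht
  exact ⟨c, hpc, hball.mono_right hc⟩

theorem Real.rpow_neg_le_mul_one_add_rpow_neg {a δ t : ℝ} (ha : 0 ≤ a) (hδ : 0 < δ)
    (ht : δ ≤ t) : t ^ (-a) ≤ (1 + δ⁻¹) ^ a * (1 + t) ^ (-a) := by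
  have hc : 0 < 1 + δ⁻¹ := by positivity
  have hle : 1 + t ≤ (1 + δ⁻¹) * t := by
    have : 1 ≤ δ⁻¹ * t := by rw [← div_eq_inv_mul, one_le_div hδ]; exact ht
    linarith
  calc t ^ (-a) = (1 + δ⁻¹) ^ a * ((1 + δ⁻¹) * t) ^ (-a) := by
        rw [Real.mul_rpow hc.le (hδ.le.trans ht), ← mul_assoc, ← Real.rpow_add hc,
          add_neg_cancel, Real.rpow_zero, one_mul]
    _ ≤ (1 + δ⁻¹) ^ a * (1 + t) ^ (-a) :=
        mul_le_mul_of_nonneg_left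
          (Real.rpow_le_rpow_of_nonpos (by linarith) hle (neg_nonpos.2 ha)) (by positivity)

theorem ae_restrict_compl_notMem_closure {X : Type*} [TopologicalSpace X] [MeasurableSpace X]
    [OpensMeasurableSpace X] {μ : Measure X} {Ω : Set X} (hΩ : IsOpen Ω)
    (hfr : μ (frontier Ω) = 0) :
    ∀ᵐ y ∂μ.restrict Ωᶜ, y ∉ closure Ω := by
  refine measure_eq_zero_iff_ae_notMem.1 ?_
  rw [Measure.restrict_apply isClosed_closure.measurableSet]
  refine measure_mono_null (fun y hy => ?_) hfr
  rw [frontier, hΩ.interior_eq]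
  exact hy

section
variable {E : Type*} [NormedAddCommGroup E] [MeasurableSpace E] (μ : Measure E)

noncomputable def interaction (a : ℝ) (Ω : Set E) (y : E) : ℝ := ∫ w in Ω, ‖y - w‖ ^ (-a) ∂μ

/-- The integrand of the kernel `k`:
`kKer s Ω x z = ∫ y in Ωᶜ, neumannKernel volume (n + 2 * s) Ω x y z`. -/
noncomputable def neumannKernel (a : ℝ) (Ω : Set E) (x y z : E) : ℝ :=
  (‖x - y‖ ^ a * ‖z - y‖ ^ a * interaction μ a Ω y)⁻¹

variable {a : ℝ}

theorem neumannKernel_eq (Ω : Set E) (x y z : E) :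
    neumannKernel μ a Ω x y z = (‖x - y‖ ^ a * interaction μ a Ω y)⁻¹ * ‖y - z‖ ^ (-a) := by
  rw [neumannKernel, Real.rpow_neg (norm_nonneg _), norm_sub_rev z y, mul_inv, mul_inv, mul_inv]
  ring

theorem neumannKernel_nonneg (Ω : Set E) (x y z : E) : 0 ≤ neumannKernel μ a Ω x y z :=
  inv_nonneg.2 (mul_nonneg (by positivity) (integral_nonneg fun _ => by positivity))

theorem integral_mul_neumannKernel {Ω : Set E} {y : E} (hA : interaction μ a Ω y ≠ 0)
    (f : E → ℝ) (x : E) :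
    ∫ z in Ω, f z * neumannKernel μ a Ω x y z ∂μ =
      (∫ w in Ω, f w * ‖y - w‖ ^ (-a) ∂μ) / interaction μ a Ω y * ‖x - y‖ ^ (-a) := by
  simp_rw [neumannKernel_eq, mul_left_comm (f _), integral_const_mul]
  rw [Real.rpow_neg (norm_nonneg _)]
  field_simp

theorem integral_neumannKernel {Ω : Set E} {y : E} (hA : interaction μ a Ω y ≠ 0) (x : E) :
    ∫ z in Ω, neumannKernel μ a Ω x y z ∂μ = ‖x - y‖ ^ (-a) := by
  have h := integral_mul_neumannKernel μ hA (fun _ => 1) x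
  simp only [one_mul] at h
  rwa [← interaction, div_self hA, one_mul] at h

end

section
variable {E : Type*} [NormedAddCommGroup E] [NormedSpace ℝ E] [FiniteDimensional ℝ E]
  [MeasurableSpace E] [BorelSpace E] (μ : Measure E) [μ.IsAddHaarMeasure] {a : ℝ}

theorem integrableOn_compl_norm_sub_rpow_neg (ha : (finrank ℝ E : ℝ) < a) {U : Set E} {y : E}
    (hU : U ∈ 𝓝 y) : IntegrableOn (fun w => ‖y - w‖ ^ (-a)) Uᶜ μ := by
  obtain ⟨δ, hδ, hball⟩ := Metric.mem_nhds_iff.1 hU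
  have hout : IntegrableOn (fun w => ‖y - w‖ ^ (-a)) (ball y δ)ᶜ μ := by
    refine Integrable.mono' (((integrable_one_add_norm ha).comp_sub_left y).const_mul
      ((1 + δ⁻¹) ^ a)).integrableOn
      (by fun_prop : Measurable fun w => ‖y - w‖ ^ (-a)).aestronglyMeasurable ?_
    refine ae_restrict_of_forall_mem measurableSet_ball.compl fun w hw => ?_
    rw [Real.norm_of_nonneg (by positivity)]
    refine Real.rpow_neg_le_mul_one_add_rpow_neg ((Nat.cast_nonneg _).trans ha.le) hδ ?_
    simpa [dist_eq_norm, norm_sub_rev] using hw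
  exact hout.mono_set (compl_subset_compl.2 hball)

theorem integrableOn_norm_sub_rpow_neg_of_notMem_closure (ha : (finrank ℝ E : ℝ) < a)
    {Ω : Set E} {y : E} (hy : y ∉ closure Ω) : IntegrableOn (fun w => ‖y - w‖ ^ (-a)) Ω μ :=
  (integrableOn_compl_norm_sub_rpow_neg μ ha (isClosed_closure.isOpen_compl.mem_nhds hy)).mono_set
    fun _ hw hw' => hw' (subset_closure hw)

theorem measurable_interaction (Ω : Set E) : Measurable (interaction μ a Ω) :=
  (Measurable.stronglyMeasurable (by fun_prop : Measurable fun p : E × E => ‖p.1 - p.2‖ ^ (-a))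
    ).integral_prod_right'.measurable

theorem interaction_pos (ha : (finrank ℝ E : ℝ) < a) {Ω : Set E} (hΩ : IsOpen Ω)
    (hne : Ω.Nonempty) {y : E} (hy : y ∉ closure Ω) : 0 < interaction μ a Ω y := by
  refine (setIntegral_pos_iff_support_of_nonneg_ae (ae_of_all _ fun w => by positivity)
    (integrableOn_norm_sub_rpow_neg_of_notMem_closure μ ha hy)).2 ?_
  have hsupp : Ω ⊆ Function.support fun w => ‖y - w‖ ^ (-a) := by
    intro w hw
    have hyw : y ≠ w := by rintro rfl; exact hy (subset_closure hw)
    exact (Real.rpow_pos_of_pos (norm_pos_iff.2 (sub_ne_zero.2 hyw)) _).ne'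
  rw [inter_eq_right.2 hsupp]
  exact hΩ.measure_pos μ hne

theorem integrable_neumannKernel_prod (ha : (finrank ℝ E : ℝ) < a) {Ω : Set E} (hΩ : IsOpen Ω)
    (hfr : μ (frontier Ω) = 0) {x : E} (hx : x ∈ Ω) :
    Integrable (fun p : E × E => neumannKernel μ a Ω x p.1 p.2)
      ((μ.restrict Ωᶜ).prod (μ.restrict Ω)) := by
  have hmeas : Measurable fun p : E × E => neumannKernel μ a Ω x p.1 p.2 := by
    have : Measurable fun p : E × E => interaction μ a Ω p.1 :=
      (measurable_interaction μ Ω).comp measurable_fst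
    unfold neumannKernel
    fun_prop
  refine (integrable_prod_iff hmeas.aestronglyMeasurable).2 ⟨?_, ?_⟩
  · filter_upwards [ae_restrict_compl_notMem_closure hΩ hfr] with y hy
    simp_rw [neumannKernel_eq]
    exact (integrableOn_norm_sub_rpow_neg_of_notMem_closure μ ha hy).const_mul _
  · refine (integrableOn_compl_norm_sub_rpow_neg μ ha (hΩ.mem_nhds hx)).congr ?_
    filter_upwards [ae_restrict_compl_notMem_closure hΩ hfr] with y hy
    simp_rw [Real.norm_of_nonneg (neumannKernel_nonneg μ _ _ _ _)]
    exact (integral_neumannKernel μ (interaction_pos μ ha hΩ ⟨x, hx⟩ hy).ne' x).symm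

theorem setIntegral_compl_eq_setIntegral_neumannKernel (ha : (finrank ℝ E : ℝ) < a) {Ω : Set E}
    (hΩ : IsOpen Ω) (hfr : μ (frontier Ω) = 0) {u : E → ℝ} (hum : Measurable u) {C : ℝ}
    (hu : ∀ y, |u y| ≤ C)
    (hNeu : ∀ᵐ y ∂μ, y ∈ Ωᶜ → u y = (interaction μ a Ω y)⁻¹ * ∫ w in Ω, u w * ‖y - w‖ ^ (-a) ∂μ)
    {x : E} (hx : x ∈ Ω) :
    IntegrableOn (fun y => (u x - u y) * ‖x - y‖ ^ (-a)) Ωᶜ μ ∧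
      IntegrableOn (fun z => (u x - u z) * ∫ y in Ωᶜ, neumannKernel μ a Ω x y z ∂μ) Ω μ ∧
      ∫ y in Ωᶜ, (u x - u y) * ‖x - y‖ ^ (-a) ∂μ =
        ∫ z in Ω, (u x - u z) * ∫ y in Ωᶜ, neumannKernel μ a Ω x y z ∂μ ∂μ := by
  have hK := integrable_neumannKernel_prod μ ha hΩ hfr hx
  have hdiff : ∀ z, ‖u x - u z‖ ≤ 2 * C := fun z => by
    rw [Real.norm_eq_abs]; linarith [abs_sub (u x) (u z), hu x, hu z]
  have hG : Integrable (fun p : E × E => (u x - u p.2) * neumannKernel μ a Ω x p.1 p.2)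
      ((μ.restrict Ωᶜ).prod (μ.restrict Ω)) :=
    hK.bdd_mul (by fun_prop : Measurable fun p : E × E => u x - u p.2).aestronglyMeasurable
      (ae_of_all _ fun p => hdiff p.2)
  have hsection : ∀ᵐ y ∂μ.restrict Ωᶜ,
      ∫ z in Ω, (u x - u z) * neumannKernel μ a Ω x y z ∂μ = (u x - u y) * ‖x - y‖ ^ (-a) := by
    filter_upwards [ae_restrict_compl_notMem_closure hΩ hfr, ae_restrict_of_ae hNeu,
      ae_restrict_mem hΩ.measurableSet.compl, hK.prod_right_ae] with y hyc hyNeu hyΩ hKy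
    have hA := (interaction_pos μ ha hΩ ⟨x, hx⟩ hyc).ne'
    have hKuy : Integrable (fun z => u z * neumannKernel μ a Ω x y z) (μ.restrict Ω) :=
      hKy.bdd_mul hum.aestronglyMeasurable (ae_of_all _ hu)
    simp_rw [sub_mul]
    rw [integral_sub (hKy.const_mul _) hKuy, integral_const_mul, integral_neumannKernel μ hA,
      integral_mul_neumannKernel μ hA, hyNeu hyΩ, inv_mul_eq_div]
  refine ⟨hG.integral_prod_left.congr hsection, ?_, ?_⟩
  · simpa only [IntegrableOn, integral_const_mul] using hG.integral_prod_right
  · calc ∫ y in Ωᶜ, (u x - u y) * ‖x - y‖ ^ (-a) ∂μ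
        = ∫ y in Ωᶜ, ∫ z in Ω, (u x - u z) * neumannKernel μ a Ω x y z ∂μ ∂μ :=
          (integral_congr_ae hsection).symm
      _ = ∫ z in Ω, ∫ y in Ωᶜ, (u x - u z) * neumannKernel μ a Ω x y z ∂μ ∂μ :=
          integral_integral_swap hG
      _ = ∫ z in Ω, (u x - u z) * ∫ y in Ωᶜ, neumannKernel μ a Ω x y z ∂μ ∂μ := by
          simp only [integral_const_mul]

end

theorem stmt11 {n : ℕ} (Ω : Set (EuclideanSpace ℝ (Fin n)))
    (hΩo : IsOpen Ω) (hΩc : HasC11Boundary Ω)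
    (s : ℝ) (hs : s ∈ Set.Ioo (0:ℝ) 1)
    (u : EuclideanSpace ℝ (Fin n) → ℝ) (hum : Measurable u)
    (hub : ∃ C : ℝ, ∀ x, |u x| ≤ C)
    (hNeu : ∀ᵐ x : EuclideanSpace ℝ (Fin n), x ∈ Ωᶜ →
      u x = (∫ y in Ω, ‖x - y‖ ^ (-((n : ℝ) + 2*s)))⁻¹ *
              ∫ y in Ω, u y * ‖x - y‖ ^ (-((n : ℝ) + 2*s))) :
    ∀ x ∈ Ω,
      MeasureTheory.IntegrableOn
        (fun y => (u x - u y) * ‖x - y‖ ^ (-((n : ℝ) + 2*s))) Ωᶜ ∧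
      MeasureTheory.IntegrableOn (fun z => (u x - u z) * kKer s Ω x z) Ω ∧
      (∫ y in Ωᶜ, (u x - u y) * ‖x - y‖ ^ (-((n : ℝ) + 2*s)))
        = ∫ z in Ω, (u x - u z) * kKer s Ω x z := by
  intro x hx
  obtain ⟨C, hC⟩ := hub
  have ha : (finrank ℝ (EuclideanSpace ℝ (Fin n)) : ℝ) < n + 2 * s := by
    rw [finrank_euclideanSpace_fin]; linarith [hs.1]
  exact setIntegral_compl_eq_setIntegral_neumannKernel volume ha hΩo
    hΩc.volume_frontier_eq_zero hum hC hNeu hx
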